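/- Let G be a finite simple graph on n vertices. Then tw(F(G)) = pw(F(G)) = n + pw(G). -/

import Mathlib

open SimpleGraph

/-- `(T, β)` is a tree decomposition of the graph `G`: `T` is a tree, every vertex of `G`
is in some bag, both endpoints of every edge of `G` lie in a common bag, and for every
vertex of `G` the set of nodes of `T` whose bag contains it induces a connected subtree. -/
def IsTreeDecomposition {V ι : Type} (G : SimpleGraph V) (T : SimpleGraph ι)
    (β : ι → Set V) : Prop :=
  T.IsTree ∧
  (∀ v : V, ∃ x : ι, v ∈ β x) ∧
  (∀ ⦃u v : V⦄, G.Adj u v → ∃ x : ι, u ∈ β x ∧ v ∈ β x) ∧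
  (∀ v : V, (T.induce {x : ι | v ∈ β x}).Connected)

/-- The width of a decomposition with bags `β`: the maximum of `|β x| - 1` over all nodes. -/
noncomputable def decompWidth {V ι : Type} (β : ι → Set V) : ℕ :=
  ⨆ x : ι, ((β x).ncard - 1)

/-- The treewidth of `G`: the minimum width of a tree decomposition of `G`. -/
noncomputable def treewidth {V : Type} (G : SimpleGraph V) : ℕ :=
  sInf { k : ℕ | ∃ (ι : Type) (T : SimpleGraph ι) (β : ι → Set V),
    IsTreeDecomposition G T β ∧ decompWidth β = k }

/-- A path decomposition of `G` with bags `β p_1, …, β p_r`: every vertex is in some bag,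
both endpoints of every edge lie in a common bag, and the bags containing a fixed vertex
form a contiguous interval. -/
def IsPathDecomposition {V : Type} (G : SimpleGraph V) (r : ℕ) (β : Fin r → Set V) : Prop :=
  (∀ v : V, ∃ x : Fin r, v ∈ β x) ∧
  (∀ ⦃u v : V⦄, G.Adj u v → ∃ x : Fin r, u ∈ β x ∧ v ∈ β x) ∧
  (∀ (v : V) (i j k : Fin r), i ≤ j → j ≤ k → v ∈ β i → v ∈ β k → v ∈ β j)

/-- The pathwidth of `G`: the minimum width of a path decomposition of `G`. -/
noncomputable def pathwidth {V : Type} (G : SimpleGraph V) : ℕ :=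
  sInf { k : ℕ | ∃ (r : ℕ) (β : Fin (r + 1) → Set V),
    IsPathDecomposition G (r + 1) β ∧ decompWidth β = k }

/-- The graph `F(G)`: its vertices are two copies of `V(G)` (the left copy `Sum.inl v`
playing the role of `v` and the right copy `Sum.inr v` playing the role of `v'`).
Both copies are cliques, `v` is adjacent to `v'` for every vertex `v` of `G`, and for
every edge `{u, v}` of `G` the edges `{u, v'}` and `{v, u'}` are present. -/
def FGraph {V : Type} (G : SimpleGraph V) : SimpleGraph (V ⊕ V) :=
  SimpleGraph.fromRel (fun a b =>
    match a, b with
    | Sum.inl u, Sum.inl v => u ≠ v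
    | Sum.inr u, Sum.inr v => u ≠ v
    | Sum.inl u, Sum.inr v => u = v ∨ G.Adj u v
    | Sum.inr u, Sum.inl v => u = v ∨ G.Adj u v)

/-!
A path decomposition of `G` in which `v` occupies the bags `l v, …, t v` yields one of `F(G)`
whose `i`-th bag holds `v` while `i ≤ t v` and `v'` once `l v ≤ i`; it has exactly `n` more
vertices per bag, so `pw(F(G)) ≤ n + pw(G)`.

Conversely, take a tree decomposition of `F(G)`. The cliques `V` and `V'` lie in bags at nodes
`x` and `y`. Since subtrees of a tree meet a path in intervals, and two intersecting subtrees
meeting the two ends of a path also meet on the path, the bags along the path from `x` to `y`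
form a path decomposition of `F(G)` that starts with `V` and ends with `V'`. In such a
decomposition every bag contains `v` or `v'` for each `v`, and the sets `{v | v, v' ∈ bag}`
form a path decomposition of `G` whose bags are `n` smaller. Hence
`n + pw(G) ≤ tw(F(G)) ≤ pw(F(G)) ≤ n + pw(G)`.
-/

namespace SimpleGraph

variable {ι : Type*} {T : SimpleGraph ι} {A B : Set ι}

lemma exists_walk_support_subset (hA : (T.induce A).Preconnected) {x y : ι}
    (hx : x ∈ A) (hy : y ∈ A) : ∃ w : T.Walk x y, ∀ z ∈ w.support, z ∈ A := by
  obtain ⟨w⟩ := hA ⟨x, hx⟩ ⟨y, hy⟩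
  refine ⟨w.map (Embedding.induce A).toHom, fun z hz => ?_⟩
  obtain ⟨z, -, rfl⟩ := List.mem_map.mp (Walk.support_map _ w ▸ hz)
  exact z.2

namespace IsAcyclic

lemma support_subset_of_isPath (hT : T.IsAcyclic) (hA : (T.induce A).Preconnected)
    {x y : ι} {p : T.Walk x y} (hp : p.IsPath) (hx : x ∈ A) (hy : y ∈ A) :
    ∀ z ∈ p.support, z ∈ A := by
  classical
  obtain ⟨w, hw⟩ := exists_walk_support_subset hA hx hy
  have hpw : p = w.bypass :=
    congrArg Subtype.val ((hT.subsingleton_path x y).elim ⟨p, hp⟩ ⟨w.bypass, w.bypass_isPath⟩)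
  exact fun z hz => hw z (w.support_bypass_subset_support (hpw ▸ hz))

lemma getVert_mem_of_le_of_le (hT : T.IsAcyclic) (hA : (T.induce A).Preconnected)
    {x y : ι} {p : T.Walk x y} (hp : p.IsPath) {i j k : ℕ} (hij : i ≤ j) (hjk : j ≤ k)
    (hi : p.getVert i ∈ A) (hk : p.getVert k ∈ A) : p.getVert j ∈ A := by
  have := hT.support_subset_of_isPath hA ((hp.drop i).take (k - i)) hi
    (by rwa [Walk.drop_getVert, Nat.add_sub_cancel' (hij.trans hjk)]) _
    (Walk.getVert_mem_support _ (j - i))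
  rwa [Walk.take_getVert, Walk.drop_getVert, min_eq_right (by omega),
    Nat.add_sub_cancel' hij] at this

/-- The edge `ab` is a bridge, so it lies on the walk `a → y → b` through `y ∈ A ∩ B`. -/
lemma mem_or_mem_of_adj (hT : T.IsAcyclic) (hA : (T.induce A).Preconnected)
    (hB : (T.induce B).Preconnected) (hAB : (A ∩ B).Nonempty) {a b : ι} (hab : T.Adj a b)
    (ha : a ∈ A) (hb : b ∈ B) : a ∈ B ∨ b ∈ A := by
  obtain ⟨y, hyA, hyB⟩ := hAB
  obtain ⟨q₁, hq₁⟩ := exists_walk_support_subset hA ha hyA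
  obtain ⟨q₂, hq₂⟩ := exists_walk_support_subset hB hyB hb
  have := isBridge_iff_forall_walk_mem_edges.mp (isAcyclic_iff_forall_adj_isBridge.mp hT hab)
    (q₁.append q₂)
  rcases List.mem_append.mp (Walk.edges_append q₁ q₂ ▸ this) with h | h
  · exact .inr (hq₁ _ (q₁.snd_mem_support_of_mem_edges h))
  · exact .inl (hq₂ _ (q₂.fst_mem_support_of_mem_edges h))

lemma exists_mem_inter_of_support_subset_union (hT : T.IsAcyclic)
    (hA : (T.induce A).Preconnected) (hB : (T.induce B).Preconnected) (hAB : (A ∩ B).Nonempty)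
    {x y : ι} (w : T.Walk x y) (hx : x ∈ A) (hy : y ∈ B)
    (hw : ∀ z ∈ w.support, z ∈ A ∨ z ∈ B) : ∃ z ∈ w.support, z ∈ A ∧ z ∈ B := by
  induction w with
  | nil => exact ⟨_, Walk.start_mem_support _, hx, hy⟩
  | @cons x x' y hxx' q ih =>
    by_cases hxB : x ∈ B
    · exact ⟨x, Walk.start_mem_support _, hx, hxB⟩
    have hx' : x' ∈ A := (hw x' (by simp)).elim id
      fun h => (hT.mem_or_mem_of_adj hA hB hAB hxx' hx h).resolve_left hxB
    obtain ⟨z, hz, hzAB⟩ := ih hx' hy fun z hz => hw z (List.mem_cons_of_mem _ hz)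
    exact ⟨z, List.mem_cons_of_mem _ hz, hzAB⟩

lemma exists_getVert_mem_inter (hT : T.IsAcyclic) (hA : (T.induce A).Preconnected)
    (hB : (T.induce B).Preconnected) (hAB : (A ∩ B).Nonempty) {x y : ι} {p : T.Walk x y}
    (hp : p.IsPath) (hx : x ∈ A) (hy : y ∈ B) :
    ∃ i ≤ p.length, p.getVert i ∈ A ∧ p.getVert i ∈ B := by
  have hcover := hT.support_subset_of_isPath (induce_union_connected hA hB hAB).preconnected hp
    (.inl hx) (.inr hy)
  obtain ⟨z, hz, hzAB⟩ := hT.exists_mem_inter_of_support_subset_union hA hB hAB p hx hy hcover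
  obtain ⟨i, rfl, hi⟩ := Walk.mem_support_iff_exists_getVert.mp hz
  exact ⟨i, hi, hzAB⟩

/-- The gate `g` is the first vertex of `A` on the path from `x` to `c`. -/
lemma exists_gate (hT : T.IsAcyclic) (hA : (T.induce A).Preconnected) {x c : ι} (hc : c ∈ A)
    (hxc : T.Reachable x c) :
    ∃ g ∈ A, ∀ B : Set ι, (T.induce B).Preconnected → x ∈ B → (A ∩ B).Nonempty → g ∈ B := by
  classical
  obtain ⟨p, hp⟩ : ∃ p : T.Walk x c, p.IsPath := hxc.elim fun w => ⟨_, w.bypass_isPath⟩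
  have hex : ∃ j, p.getVert j ∈ A := ⟨p.length, by rwa [Walk.getVert_length]⟩
  refine ⟨p.getVert (Nat.find hex), Nat.find_spec hex, fun B hB hxB hAB => ?_⟩
  obtain ⟨i, -, hiB, hiA⟩ :=
    hT.exists_getVert_mem_inter hB hA (Set.inter_comm A B ▸ hAB) hp hxB hc
  exact hT.getVert_mem_of_le_of_le hB hp (Nat.zero_le _) (Nat.find_min' hex hiA)
    (by rwa [Walk.getVert_zero]) hiB

end IsAcyclic

/-- Every edge `v ⋖ w` is a bridge: a walk from `v` to `w` can only leave `Iic v` through it. -/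
lemma hasse_isAcyclic {α : Type*} [LinearOrder α] : (hasse α).IsAcyclic := by
  have bridge : ∀ ⦃v w : α⦄, v ⋖ w → (hasse α).IsBridge s(v, w) := by
    intro v w hvw
    refine isBridge_iff_forall_walk_mem_edges.mpr fun p => ?_
    obtain ⟨d, hd, hdv, hvd⟩ := p.exists_boundary_dart (Set.Iic v) le_rfl (not_le.mpr hvw.lt)
    have hvd : v < d.snd := not_le.mp hvd
    have hcov : d.fst ⋖ d.snd := (hasse_adj.mp d.adj).resolve_right
      fun h => lt_asymm (lt_of_le_of_lt hdv hvd) h.lt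
    have hfst : d.fst = v := le_antisymm hdv (not_lt.mp fun h => hcov.2 h hvd)
    have hsnd : d.snd = w := (hfst ▸ hcov).unique_right hvw
    have hedge : d.edge = s(v, w) := by rw [← hfst, ← hsnd]; rfl
    exact hedge ▸ List.mem_map_of_mem hd
  refine isAcyclic_iff_forall_adj_isBridge.mpr fun v w hvw => ?_
  rcases hasse_adj.mp hvw with h | h
  · exact bridge h
  · exact Sym2.eq_swap ▸ bridge h

lemma pathGraph_isTree (n : ℕ) : (pathGraph (n + 1)).IsTree :=
  ⟨pathGraph_connected n, hasse_isAcyclic⟩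

lemma pathGraph_induce_connected {n : ℕ} {S : Set (Fin n)} (hS : S.OrdConnected)
    (hne : S.Nonempty) : ((pathGraph n).induce S).Connected := by
  have reach : ∀ (k : ℕ) (x y : S), (y : Fin n).val = (x : Fin n).val + k →
      ((pathGraph n).induce S).Reachable x y := by
    intro k
    induction k with
    | zero =>
      intro x y h
      obtain rfl : x = y := Subtype.ext (Fin.ext h.symm)
      rfl
    | succ k ih =>
      intro x y h
      let z : Fin n := ⟨(y : Fin n).val - 1, by omega⟩
      have hz : z ∈ S := hS.out x.2 y.2 ⟨Fin.le_def.mpr (by simp [z]; omega),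
        Fin.le_def.mpr (by simp [z])⟩
      refine (ih x ⟨z, hz⟩ (by simp [z]; omega)).trans (Adj.reachable ?_)
      simp [pathGraph_adj, z]
      omega
  refine (connected_iff _).mpr ⟨fun x y => ?_, hne.to_subtype⟩
  rcases le_total x y with h | h
  · exact reach _ x y (Nat.add_sub_cancel' h).symm
  · exact (reach _ y x (Nat.add_sub_cancel' h).symm).symm

end SimpleGraph

section Width

variable {V ι : Type}

lemma decompWidth_le {β : ι → Set V} {k : ℕ} (h : ∀ x, (β x).ncard - 1 ≤ k) :
    decompWidth β ≤ k :=
  ciSup_le' h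

variable [Finite V]

lemma le_decompWidth (β : ι → Set V) (x : ι) : (β x).ncard - 1 ≤ decompWidth β :=
  le_ciSup (f := fun x => (β x).ncard - 1)
    ⟨Nat.card V, by rintro _ ⟨y, rfl⟩; exact (Nat.sub_le _ _).trans (Set.ncard_le_card _)⟩ x

lemma decompWidth_comp_le {κ : Type} (β : ι → Set V) (f : κ → ι) :
    decompWidth (β ∘ f) ≤ decompWidth β :=
  decompWidth_le fun y => le_decompWidth β (f y)

lemma decompWidth_le_add_decompWidth {W : Type} {C : ι → Set W} {B : ι → Set V} {n : ℕ}
    (h : ∀ i, (C i).ncard ≤ n + (B i).ncard) : decompWidth C ≤ n + decompWidth B :=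
  decompWidth_le fun i => by have := h i; have := le_decompWidth B i; omega

lemma card_add_decompWidth_le {W : Type} [Finite W] {D : ι → Set V} {B : ι → Set W}
    (hD : ∀ v, ∃ i, v ∈ D i) (h : ∀ i, Nat.card V + (D i).ncard ≤ (B i).ncard) :
    Nat.card V + decompWidth D ≤ decompWidth B := by
  have hcard : Nat.card V ≤ decompWidth B := by
    rcases isEmpty_or_nonempty V with hV | ⟨⟨v⟩⟩
    · simp
    obtain ⟨i, hi⟩ := hD v
    have := (D i).ncard_pos.mpr ⟨v, hi⟩
    have := h i
    have := le_decompWidth B i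
    omega
  have : decompWidth D ≤ decompWidth B - Nat.card V :=
    decompWidth_le fun i => by have := h i; have := le_decompWidth B i; omega
  omega

end Width

section Decompositions

variable {V : Type} {G : SimpleGraph V}

lemma isPathDecomposition_univ (G : SimpleGraph V) :
    IsPathDecomposition G 1 fun _ => Set.univ :=
  ⟨fun _ => ⟨0, trivial⟩, fun _ _ _ => ⟨0, trivial, trivial⟩, fun _ _ _ _ _ _ _ _ => trivial⟩

lemma IsPathDecomposition.isTreeDecomposition {r : ℕ} {β : Fin (r + 1) → Set V}
    (h : IsPathDecomposition G (r + 1) β) : IsTreeDecomposition G (pathGraph (r + 1)) β :=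
  ⟨pathGraph_isTree r, h.1, h.2.1, fun v =>
    pathGraph_induce_connected ⟨fun i hi k hk j hj => h.2.2 v i j k hj.1 hj.2 hi hk⟩ (h.1 v)⟩

lemma IsPathDecomposition.exists_bounds {r : ℕ} {β : Fin r → Set V}
    (h : IsPathDecomposition G r β) (v : V) : ∃ l t : Fin r, ∀ i, v ∈ β i ↔ l ≤ i ∧ i ≤ t := by
  classical
  let S := Finset.univ.filter (v ∈ β ·)
  have hS : ∀ i, i ∈ S ↔ v ∈ β i := by simp [S]
  have hne : S.Nonempty := (h.1 v).imp fun i => (hS i).2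
  exact ⟨S.min' hne, S.max' hne, fun i => ⟨fun hi => ⟨S.min'_le i ((hS i).2 hi),
    S.le_max' i ((hS i).2 hi)⟩, fun hi => h.2.2 v _ i _ hi.1 hi.2 ((hS _).1 (S.min'_mem hne))
      ((hS _).1 (S.max'_mem hne))⟩⟩

lemma pathwidth_le {r : ℕ} {β : Fin (r + 1) → Set V} (h : IsPathDecomposition G (r + 1) β) :
    pathwidth G ≤ decompWidth β :=
  Nat.sInf_le ⟨r, β, h, rfl⟩

lemma exists_isPathDecomposition_decompWidth_eq_pathwidth (G : SimpleGraph V) :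
    ∃ (r : ℕ) (β : Fin (r + 1) → Set V),
      IsPathDecomposition G (r + 1) β ∧ decompWidth β = pathwidth G :=
  Nat.sInf_mem (s := {k | ∃ (r : ℕ) (β : Fin (r + 1) → Set V),
      IsPathDecomposition G (r + 1) β ∧ decompWidth β = k})
    ⟨_, 0, _, isPathDecomposition_univ G, rfl⟩

lemma exists_isTreeDecomposition_decompWidth_eq_treewidth (G : SimpleGraph V) :
    ∃ (ι : Type) (T : SimpleGraph ι) (β : ι → Set V),
      IsTreeDecomposition G T β ∧ decompWidth β = treewidth G :=
  Nat.sInf_mem (s := {k | ∃ (ι : Type) (T : SimpleGraph ι) (β : ι → Set V),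
      IsTreeDecomposition G T β ∧ decompWidth β = k})
    ⟨_, _, _, _, (isPathDecomposition_univ G).isTreeDecomposition, rfl⟩

lemma treewidth_le_pathwidth (G : SimpleGraph V) : treewidth G ≤ pathwidth G := by
  obtain ⟨r, β, h, hw⟩ := exists_isPathDecomposition_decompWidth_eq_pathwidth G
  exact hw ▸ Nat.sInf_le ⟨_, _, β, h.isTreeDecomposition, rfl⟩

namespace IsTreeDecomposition

variable {ι : Type} {T : SimpleGraph ι} {β : ι → Set V}

lemma induce_preconnected (hd : IsTreeDecomposition G T β) (v : V) :
    (T.induce {x | v ∈ β x}).Preconnected :=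
  (hd.2.2.2 v).preconnected

lemma exists_subset_bag (hd : IsTreeDecomposition G T β) {S : Set V} (hS : S.Finite)
    (hclique : S.Pairwise G.Adj) : ∃ x, S ⊆ β x := by
  induction S, hS using Set.Finite.induction_on with
  | empty => exact ⟨hd.1.connected.nonempty.some, Set.empty_subset _⟩
  | @insert a S haS _ ih =>
    obtain ⟨x, hx⟩ := ih (hclique.mono (Set.subset_insert a S))
    obtain ⟨c, hc⟩ := hd.2.1 a
    obtain ⟨g, hga, hg⟩ := hd.1.isAcyclic.exists_gate (hd.induce_preconnected a) hc
      (hd.1.connected.preconnected x c)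
    refine ⟨g, Set.insert_subset hga fun b hb => hg _ (hd.induce_preconnected b) (hx hb) ?_⟩
    exact hd.2.2.1 (hclique (Set.mem_insert a S) (Set.mem_insert_of_mem a hb)
      (ne_of_mem_of_not_mem hb haS).symm)

lemma isPathDecomposition_getVert (hd : IsTreeDecomposition G T β) {x y : ι}
    {p : T.Walk x y} (hp : p.IsPath) (hxy : ∀ v, v ∈ β x ∨ v ∈ β y) :
    IsPathDecomposition G (p.length + 1) fun i => β (p.getVert i) := by
  have hT := hd.1.isAcyclic
  have cross : ∀ ⦃u v⦄, G.Adj u v → u ∈ β x → v ∈ β y →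
      ∃ i : Fin (p.length + 1), u ∈ β (p.getVert i) ∧ v ∈ β (p.getVert i) := by
    intro u v huv hu hv
    obtain ⟨i, hi, hiu, hiv⟩ := hT.exists_getVert_mem_inter (hd.induce_preconnected u)
      (hd.induce_preconnected v) (hd.2.2.1 huv) hp hu hv
    exact ⟨⟨i, by omega⟩, hiu, hiv⟩
  have first : ∀ v ∈ β x, v ∈ β (p.getVert (0 : Fin (p.length + 1))) := by simp
  have last : ∀ v ∈ β y, v ∈ β (p.getVert (Fin.last p.length)) := by simp
  refine ⟨fun v => ?_, fun u v huv => ?_, fun v i j k hij hjk hi hk =>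
    hT.getVert_mem_of_le_of_le (hd.induce_preconnected v) hp hij hjk hi hk⟩
  · rcases hxy v with hv | hv
    · exact ⟨0, first v hv⟩
    · exact ⟨Fin.last _, last v hv⟩
  · rcases hxy u with hu | hu <;> rcases hxy v with hv | hv
    · exact ⟨0, first u hu, first v hv⟩
    · exact cross huv hu hv
    · exact (cross huv.symm hv hu).imp fun _ => And.symm
    · exact ⟨Fin.last _, last u hu, last v hv⟩

end IsTreeDecomposition

end Decompositions

section FGraph

variable {V : Type} {G : SimpleGraph V}

@[simp]
lemma FGraph_adj_inl_inl {u v : V} : (FGraph G).Adj (.inl u) (.inl v) ↔ u ≠ v := by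
  simp [FGraph, eq_comm]

@[simp]
lemma FGraph_adj_inr_inr {u v : V} : (FGraph G).Adj (.inr u) (.inr v) ↔ u ≠ v := by
  simp [FGraph, eq_comm]

@[simp]
lemma FGraph_adj_inl_inr {u v : V} :
    (FGraph G).Adj (.inl u) (.inr v) ↔ u = v ∨ G.Adj u v := by
  simpa [FGraph] using Or.imp Eq.symm Adj.symm

variable {κ : Type}

/-- Path decompositions of `F(G)` running from `V` to `V'` have this shape (see
`IsPathDecomposition.eq_swapBags`): `v` is exchanged for `v'` during `[b v, a v]`. -/
def swapBags [Preorder κ] (a b : V → κ) (i : κ) : Set (V ⊕ V) :=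
  {x | x.elim (fun v => i ≤ a v) (fun v => b v ≤ i)}

section

variable [Preorder κ] {a b : V → κ} {i : κ} {v : V}

@[simp]
lemma inl_mem_swapBags : .inl v ∈ swapBags a b i ↔ i ≤ a v := Iff.rfl

@[simp]
lemma inr_mem_swapBags : .inr v ∈ swapBags a b i ↔ b v ≤ i := Iff.rfl

end

lemma ncard_swapBags [Finite V] [LinearOrder κ] {a b : V → κ} (hba : ∀ v, b v ≤ a v)
    (i : κ) : (swapBags a b i).ncard = Nat.card V + {v | b v ≤ i ∧ i ≤ a v}.ncard := by
  have hunion : {v | i ≤ a v} ∪ {v | b v ≤ i} = Set.univ :=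
    Set.eq_univ_of_forall fun v => (le_total i (a v)).imp id fun h => (hba v).trans h
  calc (swapBags a b i).ncard = {v | i ≤ a v}.ncard + {v | b v ≤ i}.ncard := by
        rw [← Nat.card_coe_set_eq, Nat.card_congr Equiv.subtypeSum, Nat.card_sum]
        rfl
    _ = ({v | i ≤ a v} ∪ {v | b v ≤ i}).ncard + ({v | i ≤ a v} ∩ {v | b v ≤ i}).ncard :=
        (Set.ncard_union_add_ncard_inter _ _).symm
    _ = Nat.card V + {v | b v ≤ i ∧ i ≤ a v}.ncard := by
        rw [hunion, Set.ncard_univ, ← Set.ofPred_and]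
        simp only [and_comm]

lemma isPathDecomposition_swapBags {r : ℕ} {a b : V → Fin r}
    (hab : ∀ u v, (u = v ∨ G.Adj u v) → b v ≤ a u) :
    IsPathDecomposition (FGraph G) r (swapBags a b) := by
  refine ⟨Sum.forall.2 ⟨fun v => ⟨a v, inl_mem_swapBags.2 le_rfl⟩,
    fun v => ⟨b v, inr_mem_swapBags.2 le_rfl⟩⟩, ?_, ?_⟩
  · rintro (u | u) (v | v) huv <;> simp only [inl_mem_swapBags, inr_mem_swapBags]
    · exact ⟨min (a u) (a v), min_le_left _ _, min_le_right _ _⟩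
    · exact ⟨a u, le_rfl, hab u v (FGraph_adj_inl_inr.mp huv)⟩
    · exact ⟨a v, hab v u (FGraph_adj_inl_inr.mp huv.symm), le_rfl⟩
    · exact ⟨max (b u) (b v), le_max_left _ _, le_max_right _ _⟩
  · rintro (v | v) i j k hij hjk hi hk <;>
      simp only [inl_mem_swapBags, inr_mem_swapBags] at hi hk ⊢
    · exact hjk.trans hk
    · exact hi.trans hij

lemma isPathDecomposition_Icc {r : ℕ} {a b : V → Fin r}
    (hab : ∀ u v, (u = v ∨ G.Adj u v) → b v ≤ a u) :
    IsPathDecomposition G r fun i => {v | b v ≤ i ∧ i ≤ a v} :=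
  ⟨fun v => ⟨b v, le_rfl, hab v v (.inl rfl)⟩,
    fun u v huv => ⟨max (b u) (b v),
      ⟨le_max_left _ _, max_le (hab u u (.inl rfl)) (hab u v (.inr huv))⟩,
      ⟨le_max_right _ _, max_le (hab v u (.inr huv.symm)) (hab v v (.inl rfl))⟩⟩,
    fun _ _ _ _ hij hjk hi hk => ⟨hi.1.trans hij, hjk.trans hk.2⟩⟩

lemma IsPathDecomposition.eq_swapBags {r : ℕ} {B : Fin (r + 1) → Set (V ⊕ V)}
    (hB : IsPathDecomposition (FGraph G) (r + 1) B) (h0 : ∀ v, .inl v ∈ B 0)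
    (hlast : ∀ v, .inr v ∈ B (Fin.last r)) :
    ∃ a b : V → Fin (r + 1), (∀ u v, (u = v ∨ G.Adj u v) → b v ≤ a u) ∧ B = swapBags a b := by
  choose l t hlt using hB.exists_bounds
  refine ⟨fun v => t (.inl v), fun v => l (.inr v), fun u v huv => ?_, ?_⟩
  · obtain ⟨i, hu, hv⟩ := hB.2.1 (FGraph_adj_inl_inr.mpr huv)
    exact ((hlt _ i).1 hv).1.trans ((hlt _ i).1 hu).2
  · ext i (v | v)
    · exact (hlt _ i).trans (and_iff_right (((hlt _ 0).1 (h0 v)).1.trans (Fin.zero_le i)))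
    · exact (hlt _ i).trans (and_iff_left ((Fin.le_last i).trans ((hlt _ _).1 (hlast v)).2))

variable [Finite V]

lemma card_add_pathwidth_le_of_isPathDecomposition_FGraph {r : ℕ}
    {B : Fin (r + 1) → Set (V ⊕ V)} (hB : IsPathDecomposition (FGraph G) (r + 1) B)
    (h0 : ∀ v, .inl v ∈ B 0) (hlast : ∀ v, .inr v ∈ B (Fin.last r)) :
    Nat.card V + pathwidth G ≤ decompWidth B := by
  obtain ⟨a, b, hab, rfl⟩ := hB.eq_swapBags h0 hlast
  have hba v : b v ≤ a v := hab v v (.inl rfl)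
  calc Nat.card V + pathwidth G
      ≤ Nat.card V + decompWidth fun i => {v | b v ≤ i ∧ i ≤ a v} :=
        Nat.add_le_add_left (pathwidth_le (isPathDecomposition_Icc hab)) _
    _ ≤ decompWidth (swapBags a b) :=
        card_add_decompWidth_le (fun v => ⟨b v, le_rfl, hba v⟩)
          fun i => (ncard_swapBags hba i).ge

lemma pathwidth_FGraph_le (G : SimpleGraph V) :
    pathwidth (FGraph G) ≤ Nat.card V + pathwidth G := by
  obtain ⟨r, B, hB, hw⟩ := exists_isPathDecomposition_decompWidth_eq_pathwidth G
  choose l t hlt using hB.exists_bounds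
  have hab : ∀ u v, (u = v ∨ G.Adj u v) → l v ≤ t u := by
    rintro u v (rfl | huv)
    · obtain ⟨i, hi⟩ := hB.1 u
      exact ((hlt u i).1 hi).1.trans ((hlt u i).1 hi).2
    · obtain ⟨i, hu, hv⟩ := hB.2.1 huv
      exact ((hlt v i).1 hv).1.trans ((hlt u i).1 hu).2
  calc pathwidth (FGraph G) ≤ decompWidth (swapBags t l) :=
        pathwidth_le (isPathDecomposition_swapBags hab)
    _ ≤ Nat.card V + pathwidth G := hw ▸ decompWidth_le_add_decompWidth fun i => by
        rw [ncard_swapBags (fun v => hab v v (.inl rfl))]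
        simp only [← hlt, Set.ofPred_mem_eq, le_rfl]

lemma card_add_pathwidth_le_treewidth_FGraph (G : SimpleGraph V) :
    Nat.card V + pathwidth G ≤ treewidth (FGraph G) := by
  classical
  obtain ⟨ι, T, β, hd, hw⟩ := exists_isTreeDecomposition_decompWidth_eq_treewidth (FGraph G)
  have hclique (f : V → V ⊕ V) (hf : ∀ u v, u ≠ v → (FGraph G).Adj (f u) (f v)) :
      ∃ x, Set.range f ⊆ β x :=
    hd.exists_subset_bag (Set.finite_range f) <| by
      rintro _ ⟨u, rfl⟩ _ ⟨v, rfl⟩ huv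
      exact hf u v fun h => huv (congrArg f h)
  obtain ⟨x, hx⟩ := hclique .inl fun u v => FGraph_adj_inl_inl.mpr
  obtain ⟨y, hy⟩ := hclique .inr fun u v => FGraph_adj_inr_inr.mpr
  obtain ⟨p, hp⟩ : ∃ p : T.Walk x y, p.IsPath :=
    (hd.1.connected.preconnected x y).elim fun w => ⟨_, w.bypass_isPath⟩
  have hB := hd.isPathDecomposition_getVert hp
    (Sum.forall.2 ⟨fun v => .inl (hx ⟨v, rfl⟩), fun v => .inr (hy ⟨v, rfl⟩)⟩)
  calc Nat.card V + pathwidth G ≤ decompWidth fun i : Fin (p.length + 1) => β (p.getVert i) :=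
        card_add_pathwidth_le_of_isPathDecomposition_FGraph hB
          (fun v => by simpa using hx ⟨v, rfl⟩) (fun v => by simpa using hy ⟨v, rfl⟩)
    _ ≤ treewidth (FGraph G) := hw ▸ decompWidth_comp_le β _

end FGraph

/-- For every finite graph `G` on `n` vertices,
`tw(F(G)) = pw(F(G)) = n + pw(G)`. -/
theorem treewidth_pathwidth_FGraph {V : Type} [Fintype V] (G : SimpleGraph V) :
    treewidth (FGraph G) = pathwidth (FGraph G) ∧
    pathwidth (FGraph G) = Fintype.card V + pathwidth G := by
  have hlower := card_add_pathwidth_le_treewidth_FGraph G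
  have hupper := pathwidth_FGraph_le G
  have := treewidth_le_pathwidth (FGraph G)
  rw [Nat.card_eq_fintype_card] at hlower hupper
  omega
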